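/- arXiv:0712.2210 — 2 statements merged into one kernel-verified Lean document; each statement's English description precedes it below -/
import Mathlib

section
/- Let A be a symmetric complex 2×2 matrix with Re(A ξ·ξ) ≥ ε₋|ξ|² and Im(A ξ·ξ) ≥ 0 for all ξ ∈ ℝ², with ε₋ > 0. Then A is invertible, and A⁻¹ satisfies Re(A⁻¹ ζ · conj(ζ)) ≥ c|ζ|² for all ζ ∈ ℂ² for some c > 0 depending only on ε₋ and ‖A‖. -/
/-!
Write `z = x + i y` with `x, y` real. Symmetry of `A` makes the cross terms `Ax·y` and `Ay·x`
cancel, so `Re (Az·z̄) = Re (Ax·x) + Re (Ay·y) ≥ ε |z|²`: `A` is coercive on `ℂⁿ`, hence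
injective. For `ζ = Az` one has `Re (A⁻¹ζ·ζ̄) = Re (Az·z̄) ≥ ε |z|² ≥ ε |ζ|² / ‖A‖²`, with `‖A‖`
the `ℓ²` operator norm.
-/

open Matrix Complex

section

open scoped Matrix.Norms.L2Operator

theorem Matrix.sum_norm_sq_mulVec_le {𝕜 m n : Type*} [RCLike 𝕜] [Fintype m] [Fintype n]
    [DecidableEq n] (A : Matrix m n 𝕜) (z : n → 𝕜) :
    ∑ i, ‖(A *ᵥ z) i‖ ^ 2 ≤ ‖A‖ ^ 2 * ∑ j, ‖z j‖ ^ 2 := by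
  have h := pow_le_pow_left₀ (norm_nonneg _) (A.l2_opNorm_mulVec (WithLp.toLp 2 z)) 2
  rw [mul_pow, EuclideanSpace.norm_sq_eq, EuclideanSpace.norm_sq_eq] at h
  simpa using h

end

variable {n : Type*} [Fintype n]

def Matrix.IsCoercive (ε : ℝ) (A : Matrix n n ℂ) : Prop :=
  ∀ z : n → ℂ, ε * ∑ i, ‖z i‖ ^ 2 ≤ (A *ᵥ z ⬝ᵥ star z).re

theorem Matrix.IsSymm.mulVec_dotProduct_star {A : Matrix n n ℂ} (hA : A.IsSymm) (z : n → ℂ) :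
    A *ᵥ z ⬝ᵥ star z =
      A *ᵥ (fun i => ((z i).re : ℂ)) ⬝ᵥ (fun i => ((z i).re : ℂ)) +
        A *ᵥ (fun i => ((z i).im : ℂ)) ⬝ᵥ (fun i => ((z i).im : ℂ)) := by
  set x : n → ℂ := fun i => ((z i).re : ℂ)
  set y : n → ℂ := fun i => ((z i).im : ℂ)
  have hz : z = x + I • y :=
    funext fun i => (re_add_im (z i)).symm.trans (by simp [x, y, mul_comm])
  have hz_star : star z = x - I • y := by
    rw [hz]; ext i; simp [x, y, conj_ofReal, sub_eq_add_neg]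
  have hxy : A *ᵥ y ⬝ᵥ x = A *ᵥ x ⬝ᵥ y := by
    rw [dotProduct_comm, dotProduct_mulVec, ← mulVec_transpose, hA.eq]
  rw [hz_star, hz, mulVec_add, mulVec_smul, add_dotProduct, dotProduct_sub, dotProduct_sub,
    smul_dotProduct, dotProduct_smul, dotProduct_smul, smul_dotProduct, hxy]
  simp only [smul_eq_mul]
  linear_combination -(A *ᵥ y ⬝ᵥ y) * I_sq

theorem Matrix.IsSymm.isCoercive_of_real {A : Matrix n n ℂ} (hA : A.IsSymm) {ε : ℝ}
    (hre : ∀ ξ : n → ℝ,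
      ε * ∑ i, ξ i ^ 2 ≤ (A *ᵥ (fun i => (ξ i : ℂ)) ⬝ᵥ fun i => (ξ i : ℂ)).re) :
    A.IsCoercive ε := by
  intro z
  have hsq : ∑ i, ‖z i‖ ^ 2 = ∑ i, (z i).re ^ 2 + ∑ i, (z i).im ^ 2 := by
    rw [← Finset.sum_add_distrib]
    exact Finset.sum_congr rfl fun i _ => by rw [Complex.sq_norm, normSq_apply]; ring
  rw [hA.mulVec_dotProduct_star, add_re, hsq, mul_add]
  exact add_le_add (hre _) (hre _)

namespace Matrix.IsCoercive

variable [DecidableEq n] {A : Matrix n n ℂ} {ε : ℝ}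

theorem det_ne_zero (h : A.IsCoercive ε) (hε : 0 < ε) : A.det ≠ 0 := by
  intro hdet
  obtain ⟨v, hv, hAv⟩ := exists_mulVec_eq_zero_iff.2 hdet
  have hle := h v
  rw [hAv, zero_dotProduct, zero_re] at hle
  have hsum : ∑ i, ‖v i‖ ^ 2 = 0 :=
    le_antisymm (nonpos_of_mul_nonpos_right hle hε) (by positivity)
  refine hv (funext fun i => ?_)
  simpa using (Finset.sum_eq_zero_iff_of_nonneg (fun i _ => by positivity)).1 hsum i
    (Finset.mem_univ i)

open scoped Matrix.Norms.L2Operator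

theorem mul_sum_norm_sq_le_inv (h : A.IsCoercive ε) (hε : 0 ≤ ε) (hA : IsUnit A.det)
    (ζ : n → ℂ) : ε * ∑ i, ‖ζ i‖ ^ 2 ≤ ‖A‖ ^ 2 * (A⁻¹ *ᵥ ζ ⬝ᵥ star ζ).re := by
  set z := A⁻¹ *ᵥ ζ
  have hAz : A *ᵥ z = ζ := by rw [mulVec_mulVec, mul_nonsing_inv A hA, one_mulVec]
  have hre : (z ⬝ᵥ star ζ).re = (A *ᵥ z ⬝ᵥ star z).re := by
    rw [hAz, ← conj_re, ← star_def, ← star_dotProduct_star, star_star]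
  calc ε * ∑ i, ‖ζ i‖ ^ 2 ≤ ε * (‖A‖ ^ 2 * ∑ i, ‖z i‖ ^ 2) := by
        rw [← hAz]; exact mul_le_mul_of_nonneg_left (A.sum_norm_sq_mulVec_le z) hε
    _ = ‖A‖ ^ 2 * (ε * ∑ i, ‖z i‖ ^ 2) := by ring
    _ ≤ ‖A‖ ^ 2 * (z ⬝ᵥ star ζ).re := by
        rw [hre]; exact mul_le_mul_of_nonneg_left (h z) (by positivity)

theorem exists_pos_isCoercive_inv [Nonempty n] (h : A.IsCoercive ε) (hε : 0 < ε)
    (hA : IsUnit A.det) : ∃ c > 0, A⁻¹.IsCoercive c := by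
  have hnorm : 0 < ‖A‖ ^ 2 := by
    refine pow_pos (norm_pos_iff.2 fun h0 => ?_) 2
    simp [h0] at hA
  refine ⟨ε / ‖A‖ ^ 2, div_pos hε hnorm, fun ζ => ?_⟩
  rw [div_mul_eq_mul_div, div_le_iff₀' hnorm]
  exact h.mul_sum_norm_sq_le_inv hε.le hA ζ

end Matrix.IsCoercive

theorem stmt11_general (A : Matrix (Fin 2) (Fin 2) ℂ) (hsymm : A.IsSymm)
    (εm : ℝ) (hεm : 0 < εm)
    (hre : ∀ ξ : Fin 2 → ℝ,
      εm * (ξ 0 ^ 2 + ξ 1 ^ 2) ≤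
        (dotProduct (A.mulVec fun i => (ξ i : ℂ)) fun i => (ξ i : ℂ)).re) :
    IsUnit A ∧
    ∃ c : ℝ, 0 < c ∧ ∀ ζ : Fin 2 → ℂ,
      c * (‖ζ 0‖ ^ 2 + ‖ζ 1‖ ^ 2) ≤
        (dotProduct (A⁻¹.mulVec ζ) fun i => star (ζ i)).re := by
  have hcoer : A.IsCoercive εm :=
    hsymm.isCoercive_of_real fun ξ => by simpa only [Fin.sum_univ_two] using hre ξ
  have hdet : IsUnit A.det := (hcoer.det_ne_zero hεm).isUnit
  obtain ⟨c, hc, hinv⟩ := hcoer.exists_pos_isCoercive_inv hεm hdet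
  exact ⟨(isUnit_iff_isUnit_det A).2 hdet, c, hc,
    fun ζ => by simpa only [Fin.sum_univ_two, Pi.star_def] using hinv ζ⟩

/-- A symmetric complex 2×2 matrix whose quadratic form on real vectors has
real part bounded below by `ε₋|ξ|²` and nonnegative imaginary part is
invertible, and its inverse is coercive on `ℂ²`. -/
theorem stmt11 (A : Matrix (Fin 2) (Fin 2) ℂ) (hsymm : A.IsSymm)
    (εm : ℝ) (hεm : 0 < εm)
    (hre : ∀ ξ : Fin 2 → ℝ,
      εm * (ξ 0 ^ 2 + ξ 1 ^ 2) ≤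
        (dotProduct (A.mulVec fun i => (ξ i : ℂ)) fun i => (ξ i : ℂ)).re)
    (him : ∀ ξ : Fin 2 → ℝ,
      0 ≤ (dotProduct (A.mulVec fun i => (ξ i : ℂ)) fun i => (ξ i : ℂ)).im) :
    IsUnit A ∧
    ∃ c : ℝ, 0 < c ∧ ∀ ζ : Fin 2 → ℂ,
      c * (‖ζ 0‖ ^ 2 + ‖ζ 1‖ ^ 2) ≤
        (dotProduct (A⁻¹.mulVec ζ) fun i => star (ζ i)).re :=
  stmt11_general A hsymm εm hεm hre
end

section
/- Let D be a smoothly bounded simply connected domain in ℝ², and ε : D → ℂ^{2×2} bounded measurable, symmetric, with uniformly positive definite real part. Suppose E : D → ℂ² in L² satisfies ∫_D E · ∇⊥ v dA = 0 for all v ∈ H¹(D) (i.e., curl E = 0 weakly in D with E·t = 0 on ∂D in the weak sense), and E = ε⁻¹(ξ + ∇⊥ w) for some constant vector ξ ∈ ℂ² and w ∈ H¹(D). Then E ≡ 0 and ∇⊥ w = −ξ in D. -/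
open MeasureTheory

/-- The rotated gradient `∇⊥ f = (-∂₂f, ∂₁f)` of a scalar function on the plane. -/
noncomputable def perpGrad (f : EuclideanSpace ℝ (Fin 2) → ℂ)
    (x : EuclideanSpace ℝ (Fin 2)) : Fin 2 → ℂ :=
  ![-(fderiv ℝ f x (EuclideanSpace.single 1 1)), fderiv ℝ f x (EuclideanSpace.single 0 1)]

private theorem keyIneq (M : Matrix (Fin 2) (Fin 2) ℂ) (hs : M.IsSymm) (εm : ℝ)
    (hc : ∀ ξ : Fin 2 → ℝ, εm * (ξ 0 ^ 2 + ξ 1 ^ 2) ≤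
        (dotProduct (M.mulVec fun i => (ξ i : ℂ)) fun i => (ξ i : ℂ)).re)
    (z : Fin 2 → ℂ) :
    εm * ((z 0).re ^ 2 + (z 1).re ^ 2 + (z 0).im ^ 2 + (z 1).im ^ 2) ≤
      (∑ i : Fin 2, z i * (starRingEnd ℂ) (M.mulVec z i)).re := by
  have h01 : M 0 1 = M 1 0 := by
    have := congrFun (congrFun hs.eq 1) 0
    simpa using this
  have ha := hc fun i => (z i).re
  have hb := hc fun i => (z i).im
  simp only [Matrix.mulVec, dotProduct, Fin.sum_univ_two] at *
  simp only [Complex.add_re, Complex.add_im, Complex.mul_re, Complex.mul_im, Complex.conj_re,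
    Complex.conj_im, Complex.ofReal_re, Complex.ofReal_im] at *
  rw [h01] at *
  ring_nf at *
  linarith

private theorem keyInv (M : Matrix (Fin 2) (Fin 2) ℂ) (εm : ℝ) (hεm : 0 < εm)
    (hkey : ∀ z : Fin 2 → ℂ, εm * ((z 0).re ^ 2 + (z 1).re ^ 2 + (z 0).im ^ 2 + (z 1).im ^ 2) ≤
      (∑ i : Fin 2, z i * (starRingEnd ℂ) (M.mulVec z i)).re)
    (v : Fin 2 → ℂ) : M.mulVec (M⁻¹.mulVec v) = v := by
  have hdet : M.det ≠ 0 := by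
    intro h
    obtain ⟨z, hz, hz0⟩ := (Matrix.exists_mulVec_eq_zero_iff).2 h
    have hk := hkey z
    rw [hz0] at hk
    simp only [Pi.zero_apply, map_zero, mul_zero, Fin.sum_univ_two, add_zero,
      Complex.zero_re] at hk
    have hS : (z 0).re ^ 2 + (z 1).re ^ 2 + (z 0).im ^ 2 + (z 1).im ^ 2 ≤ 0 := by
      by_contra hcon
      push_neg at hcon
      nlinarith
    have h1 : (z 0).re = 0 := by
      nlinarith [sq_nonneg (z 1).re, sq_nonneg (z 0).im, sq_nonneg (z 1).im, sq_nonneg (z 0).re]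
    have h2 : (z 1).re = 0 := by
      nlinarith [sq_nonneg (z 0).re, sq_nonneg (z 0).im, sq_nonneg (z 1).im]
    have h3 : (z 0).im = 0 := by
      nlinarith [sq_nonneg (z 0).re, sq_nonneg (z 1).re, sq_nonneg (z 1).im]
    have h4 : (z 1).im = 0 := by
      nlinarith [sq_nonneg (z 0).re, sq_nonneg (z 1).re, sq_nonneg (z 0).im]
    exact hz (funext fun i => by fin_cases i <;> [exact Complex.ext h1 h3; exact Complex.ext h2 h4])
  rw [Matrix.mulVec_mulVec, Matrix.mul_nonsing_inv M (isUnit_iff_ne_zero.mpr hdet),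
    Matrix.one_mulVec]

private noncomputable def linTest (c : Fin 2 → ℂ) : EuclideanSpace ℝ (Fin 2) →L[ℝ] ℂ :=
  c 1 • ((Complex.ofRealCLM : ℝ →L[ℝ] ℂ).comp (EuclideanSpace.proj 0))
    - c 0 • ((Complex.ofRealCLM : ℝ →L[ℝ] ℂ).comp (EuclideanSpace.proj 1))

private theorem perpGrad_test (c : Fin 2 → ℂ) (w : EuclideanSpace ℝ (Fin 2) → ℂ)
    (hw : ContDiff ℝ 1 w) (x : EuclideanSpace ℝ (Fin 2)) :
    perpGrad (fun y => (starRingEnd ℂ) (w y) + linTest c y) x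
      = fun i => (starRingEnd ℂ) (perpGrad w x i) + c i := by
  have hwd : HasFDerivAt w (fderiv ℝ w x) x := (hw.differentiable one_ne_zero x).hasFDerivAt
  have hconj : HasFDerivAt (fun y => (starRingEnd ℂ) (w y))
      ((Complex.conjCLE.toContinuousLinearMap).comp (fderiv ℝ w x)) x :=
    (Complex.conjCLE.toContinuousLinearMap.hasFDerivAt).comp x hwd
  have hsum := hconj.add ((linTest c).hasFDerivAt)
  have hfd := hsum.fderiv
  have hval : ∀ e, fderiv ℝ (fun y => (starRingEnd ℂ) (w y) + linTest c y) x e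
      = (starRingEnd ℂ) (fderiv ℝ w x e) + linTest c e := by
    intro e; rw [show (fun y => (starRingEnd ℂ) (w y) + linTest c y) = (fun y => (starRingEnd ℂ) (w y)) + ⇑(linTest c) from rfl, hfd]; simp [Complex.conjCLE]
  have hlv : ∀ j : Fin 2, linTest c (EuclideanSpace.single j 1) = ![c 1, -(c 0)] j := by
    intro j
    fin_cases j <;> simp [linTest, EuclideanSpace.single_apply]
  funext i
  fin_cases i <;> simp [perpGrad, hval, hlv] <;> ring

/-- The interior cell problem has only the trivial solution: if `E ∈ L²(D)`
is weakly curl-free with vanishing weak tangential trace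
(`∫_D E·∇⊥v = 0` for all `v ∈ H¹(D)`, here tested against `C¹` functions),
and `E = ε⁻¹(ξ + ∇⊥w)` in the simply connected domain `D`, then `E ≡ 0`
and `∇⊥w = -ξ` a.e. in `D`. -/
theorem stmt12 (D : Set (EuclideanSpace ℝ (Fin 2)))
    (hDopen : IsOpen D) (hDbd : Bornology.IsBounded D)
    (hDsc : SimplyConnectedSpace D)
    (hDsmooth : ∃ f : EuclideanSpace ℝ (Fin 2) → ℝ, ContDiff ℝ (⊤ : ℕ∞) f ∧
      D = {x | f x < 0} ∧ ∀ x ∈ frontier D, fderiv ℝ f x ≠ 0)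
    (ε : EuclideanSpace ℝ (Fin 2) → Matrix (Fin 2) (Fin 2) ℂ)
    (hεsymm : ∀ x ∈ D, (ε x).IsSymm)
    (hεmeas : ∀ i j, Measurable fun x => ε x i j)
    (Cε : ℝ) (hεbd : ∀ x ∈ D, ∀ i j, ‖ε x i j‖ ≤ Cε)
    (εm : ℝ) (hεm : 0 < εm)
    (hεcoer : ∀ x ∈ D, ∀ ξ : Fin 2 → ℝ,
      εm * (ξ 0 ^ 2 + ξ 1 ^ 2) ≤
        (dotProduct ((ε x).mulVec fun i => (ξ i : ℂ)) fun i => (ξ i : ℂ)).re)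
    (E : EuclideanSpace ℝ (Fin 2) → Fin 2 → ℂ)
    (hEL2 : MemLp E 2 (volume.restrict D))
    (hcurl : ∀ v : EuclideanSpace ℝ (Fin 2) → ℂ, ContDiff ℝ 1 v →
      (∫ x in D, ∑ i : Fin 2, E x i * perpGrad v x i) = 0)
    (ξ : Fin 2 → ℂ) (w : EuclideanSpace ℝ (Fin 2) → ℂ) (hw : ContDiff ℝ 1 w)
    (hE : ∀ x ∈ D, E x = (ε x)⁻¹.mulVec fun i => ξ i + perpGrad w x i) :
    (∀ᵐ x ∂(volume.restrict D), E x = 0) ∧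
    (∀ᵐ x ∂(volume.restrict D), ∀ i, perpGrad w x i = -ξ i) := by
  set μ := volume.restrict D with hμ
  haveI : IsFiniteMeasure μ := ⟨by
    rw [hμ, Measure.restrict_apply_univ]; exact hDbd.measure_lt_top⟩
  -- the key pointwise inequality, at each point of D
  have hkey : ∀ x ∈ D, ∀ z : Fin 2 → ℂ,
      εm * ((z 0).re ^ 2 + (z 1).re ^ 2 + (z 0).im ^ 2 + (z 1).im ^ 2) ≤
        (∑ i : Fin 2, z i * (starRingEnd ℂ) ((ε x).mulVec z i)).re :=
    fun x hx => keyIneq (ε x) (hεsymm x hx) εm (hεcoer x hx)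
  have hinv : ∀ x ∈ D, ∀ v : Fin 2 → ℂ, (ε x).mulVec ((ε x)⁻¹.mulVec v) = v :=
    fun x hx => keyInv (ε x) εm hεm (hkey x hx)
  have hεE : ∀ x ∈ D, (ε x).mulVec (E x) = fun i => ξ i + perpGrad w x i := by
    intro x hx
    rw [hE x hx]
    exact hinv x hx _
  -- the test function
  set c : Fin 2 → ℂ := fun i => (starRingEnd ℂ) (ξ i) with hc
  have hv : ContDiff ℝ 1 (fun y => (starRingEnd ℂ) (w y) + linTest c y) :=
    (Complex.conjCLE.toContinuousLinearMap.contDiff.comp hw).add (linTest c).contDiff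
  have hint0 := hcurl _ hv
  set g : EuclideanSpace ℝ (Fin 2) → ℂ :=
    fun x => ∑ i : Fin 2, E x i * (starRingEnd ℂ) (ξ i + perpGrad w x i) with hg
  have hgeq : (fun x => ∑ i : Fin 2,
      E x i * perpGrad (fun y => (starRingEnd ℂ) (w y) + linTest c y) x i) = g := by
    funext x
    rw [perpGrad_test c w hw x]
    simp [hg, hc, map_add, mul_add, add_comm]
  rw [show (∫ x in D, ∑ i : Fin 2,
      E x i * perpGrad (fun y => (starRingEnd ℂ) (w y) + linTest c y) x i)
      = ∫ x, g x ∂μ from by rw [hμ]; exact congrArg _ hgeq] at hint0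
  -- continuity and boundedness of ξ + ∇⊥w
  have hder : ∀ e, Continuous fun x => fderiv ℝ w x e :=
    fun e => (hw.continuous_fderiv one_ne_zero).clm_apply continuous_const
  have hpgc0 : Continuous fun x => ξ 0 + perpGrad w x 0 := by
    simp only [perpGrad, Matrix.cons_val_zero]
    exact continuous_const.add (hder (EuclideanSpace.single 1 1)).neg
  have hpgc1 : Continuous fun x => ξ 1 + perpGrad w x 1 := by
    simp only [perpGrad, Matrix.cons_val_one, Matrix.head_cons]
    exact continuous_const.add (hder (EuclideanSpace.single 0 1))
  have hpgc : ∀ i : Fin 2, Continuous fun x => ξ i + perpGrad w x i := by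
    intro i
    fin_cases i
    · exact hpgc0
    · exact hpgc1
  obtain ⟨C0, hC0⟩ := (hDbd.isCompact_closure).exists_bound_of_continuousOn
    ((hpgc 0).continuousOn)
  obtain ⟨C1, hC1⟩ := (hDbd.isCompact_closure).exists_bound_of_continuousOn
    ((hpgc 1).continuousOn)
  -- integrability of g
  have hEmes := hEL2.1
  have hEint : Integrable E μ :=
    memLp_one_iff_integrable.mp (hEL2.mono_exponent (by norm_num))
  have hgmes : AEStronglyMeasurable g μ := by
    apply Finset.aestronglyMeasurable_fun_sum
    intro i _
    exact ((continuous_apply i).comp_aestronglyMeasurable hEmes).mul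
      (((Complex.continuous_conj.comp (hpgc i))).aestronglyMeasurable)
  have hgint : Integrable g μ := by
    apply Integrable.mono' (hEint.norm.const_mul (C0 + C1)) hgmes
    filter_upwards [ae_restrict_mem hDopen.measurableSet] with x hx
    have hb0 : ‖ξ 0 + perpGrad w x 0‖ ≤ C0 := hC0 x (subset_closure hx)
    have hb1 : ‖ξ 1 + perpGrad w x 1‖ ≤ C1 := hC1 x (subset_closure hx)
    have he0 : ‖E x 0‖ ≤ ‖E x‖ := norm_le_pi_norm (E x) 0
    have he1 : ‖E x 1‖ ≤ ‖E x‖ := norm_le_pi_norm (E x) 1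
    have hnn : (0:ℝ) ≤ ‖E x‖ := norm_nonneg _
    calc ‖g x‖ ≤ ‖E x 0 * (starRingEnd ℂ) (ξ 0 + perpGrad w x 0)‖
        + ‖E x 1 * (starRingEnd ℂ) (ξ 1 + perpGrad w x 1)‖ := by
          rw [hg]; simp only [Fin.sum_univ_two]; exact norm_add_le _ _
      _ ≤ ‖E x‖ * C0 + ‖E x‖ * C1 := by
          rw [norm_mul, norm_mul, RCLike.norm_conj, RCLike.norm_conj]
          exact add_le_add (mul_le_mul he0 hb0 (norm_nonneg _) hnn)
            (mul_le_mul he1 hb1 (norm_nonneg _) hnn)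
      _ = (C0 + C1) * ‖E x‖ := by ring
  -- the quadratic quantity
  set ρ : EuclideanSpace ℝ (Fin 2) → ℝ := fun x =>
    (E x 0).re ^ 2 + (E x 1).re ^ 2 + (E x 0).im ^ 2 + (E x 1).im ^ 2 with hρ
  have hρnn : ∀ x, 0 ≤ ρ x := fun x => by positivity
  have hρle : ∀ x, ρ x ≤ 2 * ‖E x‖ ^ 2 := by
    intro x
    have h0 : (E x 0).re ^ 2 + (E x 0).im ^ 2 ≤ ‖E x‖ ^ 2 := by
      have := norm_le_pi_norm (E x) 0
      have h := Complex.sq_norm (E x 0)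
      have : ‖E x 0‖ ^ 2 ≤ ‖E x‖ ^ 2 := by
        apply sq_le_sq' <;> [nlinarith [norm_nonneg (E x 0), norm_nonneg (E x)]; skip]
        exact (norm_le_pi_norm (E x) 0)
      rw [Complex.sq_norm, Complex.normSq_apply] at this
      nlinarith
    have h1 : (E x 1).re ^ 2 + (E x 1).im ^ 2 ≤ ‖E x‖ ^ 2 := by
      have : ‖E x 1‖ ^ 2 ≤ ‖E x‖ ^ 2 := by
        apply sq_le_sq' <;> [nlinarith [norm_nonneg (E x 1), norm_nonneg (E x)]; skip]
        exact (norm_le_pi_norm (E x) 1)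
      rw [Complex.sq_norm, Complex.normSq_apply] at this
      nlinarith
    simp only [hρ]; nlinarith
  have hρmes : AEStronglyMeasurable ρ μ := by
    have h0 := (continuous_apply (0 : Fin 2)).comp_aestronglyMeasurable hEmes
    have h1 := (continuous_apply (1 : Fin 2)).comp_aestronglyMeasurable hEmes
    exact ((((Complex.continuous_re.comp_aestronglyMeasurable h0).pow 2).add
      ((Complex.continuous_re.comp_aestronglyMeasurable h1).pow 2)).add
      ((Complex.continuous_im.comp_aestronglyMeasurable h0).pow 2)).add
      ((Complex.continuous_im.comp_aestronglyMeasurable h1).pow 2)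
  have hρint : Integrable ρ μ := by
    apply Integrable.mono' ((hEL2.norm.integrable_sq).const_mul 2) hρmes
    filter_upwards with x
    rw [Real.norm_eq_abs, abs_of_nonneg (hρnn x)]
    exact hρle x
  -- pointwise inequality on D
  have hpt : ∀ x ∈ D, εm * ρ x ≤ (g x).re := by
    intro x hx
    have := hkey x hx (E x)
    rw [hεE x hx] at this
    exact this
  -- integral comparison
  have hre : ∫ x, (g x).re ∂μ = 0 := by
    have h := integral_re hgint
    rw [hint0] at h
    simpa using h
  have hcomp : εm * ∫ x, ρ x ∂μ ≤ 0 := by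
    rw [← integral_const_mul, ← hre]
    apply integral_mono_ae (hρint.const_mul εm) hgint.re
    filter_upwards [ae_restrict_mem hDopen.measurableSet] with x hx
    exact hpt x hx
  have hρ0 : ∫ x, ρ x ∂μ = 0 := by
    have hge : 0 ≤ ∫ x, ρ x ∂μ := integral_nonneg hρnn
    nlinarith
  have hae0 : ∀ᵐ x ∂μ, ρ x = 0 := by
    have h := (integral_eq_zero_iff_of_nonneg_ae (Filter.Eventually.of_forall hρnn) hρint).mp hρ0
    filter_upwards [h] with x hx
    simpa using hx
  have hEzero : ∀ᵐ x ∂μ, E x = 0 := by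
    filter_upwards [hae0] with x hx
    have h : (E x 0).re ^ 2 + (E x 1).re ^ 2 + (E x 0).im ^ 2 + (E x 1).im ^ 2 = 0 := hx
    have h1 : (E x 0).re = 0 := by
      nlinarith [sq_nonneg (E x 0).re, sq_nonneg (E x 1).re, sq_nonneg (E x 0).im, sq_nonneg (E x 1).im]
    have h2 : (E x 1).re = 0 := by
      nlinarith [sq_nonneg (E x 0).re, sq_nonneg (E x 1).re, sq_nonneg (E x 0).im, sq_nonneg (E x 1).im]
    have h3 : (E x 0).im = 0 := by
      nlinarith [sq_nonneg (E x 0).re, sq_nonneg (E x 1).re, sq_nonneg (E x 0).im, sq_nonneg (E x 1).im]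
    have h4 : (E x 1).im = 0 := by
      nlinarith [sq_nonneg (E x 0).re, sq_nonneg (E x 1).re, sq_nonneg (E x 0).im, sq_nonneg (E x 1).im]
    funext i
    fin_cases i
    · exact Complex.ext h1 h3
    · exact Complex.ext h2 h4
  refine ⟨hEzero, ?_⟩
  filter_upwards [hEzero, ae_restrict_mem hDopen.measurableSet] with x hx0 hxD
  intro i
  have h := hεE x hxD
  rw [hx0, Matrix.mulVec_zero] at h
  have := congrFun h.symm i
  simp only [Pi.zero_apply] at this
  linear_combination (norm := ring_nf) this
end
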